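/- Let v ∈ Ω_A^ω A be an ω-word and suppose v = v_i · ṽ_i is a factorization in the ω-word monoid for each i ≥ 1. Then there exist indices i < j such that v = v_j · ṽ_i. -/

import Mathlib

/-!
Induction on the ω-word. The empty word and a letter have only trivial factorizations, so two
of the given factorizations have the same shape and can be crossed. For a product `u₁ * u₂`,
equidivisibility places each cut inside `u₁` or inside `u₂`, one of which happens infinitely
often. For an ω-power `u ^ ω`, every factorization has the form `(u ^ k * a, b * u ^ l)` with
`a * b = u` and `k, l ∈ ℕ ∪ {ω}`: such pairs form a compact set, and since multiplication is
open every factorization of `u ^ ω` is a limit of factorizations of the finite powers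
`u ^ (n + 1)`. Passing to a subsequence along which `k` is nondecreasing, crossed
factorizations of `u` yield crossed factorizations of `u ^ ω`.
-/

open Filter

/-- The ω-subalgebra of `M` generated by the alphabet: the smallest subset of `M`
containing `1` and the letters (via `f : A → M`) and closed under multiplication and
the ω-power `w`.  Its members are the ω-words. -/
inductive OmegaWord {A M : Type*} [Monoid M] (f : A → M) (w : M → M) : M → Prop
  | one : OmegaWord f w 1
  | letter (a : A) : OmegaWord f w (f a)
  | mul {u v : M} : OmegaWord f w u → OmegaWord f w v → OmegaWord f w (u * v)
  | omega {u : M} : OmegaWord f w u → OmegaWord f w (w u)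

open Topology

lemma exists_strictMono_forall_or {p q : ℕ → Prop} (h : ∀ n, p n ∨ q n) :
    ∃ φ : ℕ → ℕ, StrictMono φ ∧ ((∀ n, p (φ n)) ∨ ∀ n, q (φ n)) := by
  rcases frequently_or_distrib.1 (Eventually.frequently (Eventually.of_forall h) :
    ∃ᶠ n in atTop, p n ∨ q n) with hp | hq
  · obtain ⟨φ, hφ, hpφ⟩ := extraction_of_frequently_atTop hp
    exact ⟨φ, hφ, .inl hpφ⟩
  · obtain ⟨φ, hφ, hqφ⟩ := extraction_of_frequently_atTop hq
    exact ⟨φ, hφ, .inr hqφ⟩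

def Equidivisible (M : Type*) [Monoid M] : Prop :=
  ∀ s t u v : M, s * t = u * v →
    ∃ z : M, (s = u * z ∧ z * t = v) ∨ (s * z = u ∧ t = z * v)

section Algebra

variable {M : Type*} [Monoid M]

def HasCompatibleFactorizations (v : M) : Prop :=
  ∀ x y : ℕ → M, (∀ i, x i * y i = v) → ∃ i j, i < j ∧ x j * y i = v

lemma hasCompatibleFactorizations_of_forall_mul_eq {v : M}
    (h : ∀ x y : M, x * y = v → (x = 1 ∧ y = v) ∨ (x = v ∧ y = 1)) :
    HasCompatibleFactorizations v := by
  intro x y hxy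
  obtain ⟨φ, hφ, hleft | hright⟩ := exists_strictMono_forall_or fun i => h _ _ (hxy i)
  · exact ⟨φ 0, φ 1, hφ one_pos, by rw [(hleft 1).1, (hleft 0).2, one_mul]⟩
  · exact ⟨φ 0, φ 1, hφ one_pos, by rw [(hright 1).1, (hright 0).2, mul_one]⟩

lemma HasCompatibleFactorizations.mul (hequi : Equidivisible M) {u₁ u₂ : M}
    (h₁ : HasCompatibleFactorizations u₁) (h₂ : HasCompatibleFactorizations u₂) :
    HasCompatibleFactorizations (u₁ * u₂) := by
  intro x y hxy
  choose z hz using fun i => hequi _ _ _ _ (hxy i)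
  obtain ⟨φ, hφ, hleft | hright⟩ := exists_strictMono_forall_or hz
  · obtain ⟨i, j, hij, h⟩ := h₂ (z ∘ φ) (y ∘ φ) fun i => (hleft i).2
    exact ⟨φ i, φ j, hφ hij, by rw [(hleft j).1, mul_assoc]; exact congrArg _ h⟩
  · obtain ⟨i, j, hij, h⟩ := h₁ (x ∘ φ) (z ∘ φ) fun i => (hright i).1
    refine ⟨φ i, φ j, hφ hij, ?_⟩
    rw [(hright i).2, ← mul_assoc]
    exact congrArg (· * u₂) h

lemma exists_pow_mul_of_mul_eq_pow_succ (hequi : Equidivisible M) {u c d : M} {n : ℕ}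
    (hcd : c * d = u ^ (n + 1)) :
    ∃ (a b : M) (k l : ℕ), a * b = u ∧ c = u ^ k * a ∧ d = b * u ^ l := by
  induction n generalizing c d with
  | zero => exact ⟨c, d, 0, 0, by simpa using hcd, by simp, by simp⟩
  | succ n ih =>
    rw [pow_succ'] at hcd
    obtain ⟨z, ⟨rfl, hz⟩ | ⟨hz, rfl⟩⟩ := hequi _ _ _ _ hcd
    · obtain ⟨a, b, k, l, hab, rfl, rfl⟩ := ih hz
      exact ⟨a, b, k + 1, l, hab, by rw [pow_succ', mul_assoc], rfl⟩
    · exact ⟨c, z, 0, n + 1, hz, by simp, rfl⟩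

end Algebra

section Topology

variable {M : Type*} [Monoid M]

def omegaPow (u e : M) (k : ℕ∞) : M := k.recTopCoe e (u ^ ·)

@[simp] lemma omegaPow_top (u e : M) : omegaPow u e ⊤ = e := rfl

@[simp] lemma omegaPow_natCast (u e : M) (n : ℕ) : omegaPow u e n = u ^ n := rfl

variable [TopologicalSpace M] {u e : M}

lemma continuous_omegaPow (hu : Tendsto (u ^ ·) atTop (𝓝 e)) :
    Continuous (omegaPow u e) := by
  refine continuous_iff_continuousAt.2 fun k => ?_
  induction k with
  | top =>
    refine nhds_top_basis.tendsto_left_iff.2 fun s hs => ?_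
    obtain ⟨N, hN⟩ := eventually_atTop.1 (hu hs)
    refine ⟨N, ENat.natCast_lt_top N, fun k hk => ?_⟩
    induction k with
    | top => exact mem_of_mem_nhds hs
    | coe n => exact hN n (mod_cast (show (N : ℕ∞) < n from hk).le)
  | coe n => rw [ContinuousAt, ENat.nhds_natCast]; exact tendsto_pure_nhds _ _

variable [ContinuousMul M] [T2Space M]

lemma pow_mul_eq_of_tendsto_pow (hu : Tendsto (u ^ ·) atTop (𝓝 e)) (n : ℕ) :
    u ^ n * e = e :=
  tendsto_nhds_unique (hu.const_mul (u ^ n)) <| by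
    simpa only [← pow_add, add_comm n] using (tendsto_add_atTop_iff_nat n).2 hu

lemma mul_pow_eq_of_tendsto_pow (hu : Tendsto (u ^ ·) atTop (𝓝 e)) (n : ℕ) :
    e * u ^ n = e :=
  tendsto_nhds_unique (hu.mul_const (u ^ n)) <| by
    simpa only [← pow_add] using (tendsto_add_atTop_iff_nat n).2 hu

lemma mul_self_eq_of_tendsto_pow (hu : Tendsto (u ^ ·) atTop (𝓝 e)) : e * e = e :=
  tendsto_nhds_unique (hu.mul_const e) <| by
    simpa only [pow_mul_eq_of_tendsto_pow hu] using tendsto_const_nhds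

lemma omegaPow_add (hu : Tendsto (u ^ ·) atTop (𝓝 e)) (k l : ℕ∞) :
    omegaPow u e (k + l) = omegaPow u e k * omegaPow u e l := by
  induction k <;> induction l
  · simp [mul_self_eq_of_tendsto_pow hu]
  · simp [mul_pow_eq_of_tendsto_pow hu]
  · simp [pow_mul_eq_of_tendsto_pow hu]
  · simp [← Nat.cast_add, pow_add]

lemma omegaPow_eq_of_le (hu : Tendsto (u ^ ·) atTop (𝓝 e)) {k k' : ℕ∞}
    (hk : omegaPow u e k = e) (hle : k ≤ k') : omegaPow u e k' = e := by
  obtain ⟨d, rfl⟩ := exists_add_of_le hle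
  calc omegaPow u e (k + d) = omegaPow u e ⊤ * omegaPow u e d := by
        rw [omegaPow_add hu, hk, omegaPow_top]
    _ = e := by rw [← omegaPow_add hu, top_add, omegaPow_top]

lemma exists_omegaPow_mul_of_mul_eq [CompactSpace M]
    (hopen : IsOpenMap fun p : M × M => p.1 * p.2) (hequi : Equidivisible M)
    (hu : Tendsto (u ^ ·) atTop (𝓝 e)) {x y : M} (hxy : x * y = e) :
    ∃ (a b : M) (k l : ℕ∞),
      a * b = u ∧ x = omegaPow u e k * a ∧ y = b * omegaPow u e l := by
  let Φ : (M × M) × (ℕ∞ × ℕ∞) → M × M := fun q =>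
    (omegaPow u e q.2.1 * q.1.1, q.1.2 * omegaPow u e q.2.2)
  let K : Set ((M × M) × (ℕ∞ × ℕ∞)) := {q | q.1.1 * q.1.2 = u}
  have hΦ : Continuous Φ := by
    have := continuous_omegaPow hu
    fun_prop
  have hK : IsClosed K := isClosed_eq (by fun_prop) continuous_const
  suffices (x, y) ∈ closure (Φ '' K) by
    rw [(hK.isCompact.image hΦ).isClosed.closure_eq] at this
    obtain ⟨⟨⟨a, b⟩, k, l⟩, hab, hΦxy⟩ := this
    exact ⟨a, b, k, l, hab, (congrArg Prod.fst hΦxy).symm, (congrArg Prod.snd hΦxy).symm⟩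
  -- every neighbourhood of `(x, y)` contains a factorization of some power `u ^ (n + 1)`
  refine mem_closure_iff.2 fun o ho hxyo => ?_
  have hmem : {m | ∃ p ∈ o, p.1 * p.2 = m} ∈ 𝓝 e :=
    (hopen o ho).mem_nhds ⟨(x, y), hxyo, hxy⟩
  obtain ⟨n, p, hpo, hp⟩ := (((tendsto_add_atTop_iff_nat 1).2 hu).eventually hmem).exists
  obtain ⟨a, b, k, l, hab, hpa, hpb⟩ := exists_pow_mul_of_mul_eq_pow_succ hequi hp
  exact ⟨p, hpo, ⟨⟨a, b⟩, k, l⟩, hab, Prod.ext hpa.symm hpb.symm⟩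

lemma HasCompatibleFactorizations.of_tendsto_pow [CompactSpace M]
    (hopen : IsOpenMap fun p : M × M => p.1 * p.2) (hequi : Equidivisible M)
    (hu : Tendsto (u ^ ·) atTop (𝓝 e)) (h : HasCompatibleFactorizations u) :
    HasCompatibleFactorizations e := by
  intro x y hxy
  choose a b k l hab hx hy using fun i => exists_omegaPow_mul_of_mul_eq hopen hequi hu (hxy i)
  obtain ⟨φ, hmono⟩ := wellQuasiOrdered_le.exists_monotone_subseq k
  obtain ⟨i, j, hij, habji⟩ := h (a ∘ φ) (b ∘ φ) fun i => hab (φ i)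
  refine ⟨φ i, φ j, φ.strictMono hij, ?_⟩
  have hE : ∀ m n {a' b' : M}, a' * b' = u →
      omegaPow u e m * a' * (b' * omegaPow u e n) = omegaPow u e (m + 1 + n) := by
    rintro m n a' b' rfl
    rw [omegaPow_add hu, omegaPow_add hu, ← Nat.cast_one, omegaPow_natCast, pow_one]
    simp only [mul_assoc]
  have hi : omegaPow u e (k (φ i) + 1 + l (φ i)) = e := by
    rw [← hE _ _ (hab (φ i)), ← hx, ← hy, hxy]
  calc x (φ j) * y (φ i)
      = omegaPow u e (k (φ j)) * a (φ j) * (b (φ i) * omegaPow u e (l (φ i))) := by rw [hx, hy]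
    _ = omegaPow u e (k (φ j) + 1 + l (φ i)) := hE _ _ habji
    _ = e := omegaPow_eq_of_le hu hi (by gcongr; exact hmono i j hij.le)

end Topology

theorem OmegaWord.hasCompatibleFactorizations {A M : Type*} [Monoid M] [TopologicalSpace M]
    [ContinuousMul M] [CompactSpace M] [T2Space M]
    (hopen : IsOpenMap fun p : M × M => p.1 * p.2) (hequi : Equidivisible M)
    {f : A → M} {w : M → M} (hlim : ∀ m : M, Tendsto (m ^ ·) atTop (𝓝 (w m)))
    (hone : ∀ u v : M, u * v = 1 → u = 1 ∧ v = 1)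
    (hletter : ∀ (a : A) (u v : M), u * v = f a → (u = 1 ∧ v = f a) ∨ (u = f a ∧ v = 1))
    {v : M} (hv : OmegaWord f w v) : HasCompatibleFactorizations v := by
  induction hv with
  | one =>
    exact hasCompatibleFactorizations_of_forall_mul_eq fun x y hxy => .inl (hone x y hxy)
  | letter a => exact hasCompatibleFactorizations_of_forall_mul_eq (hletter a)
  | mul _ _ ih₁ ih₂ => exact ih₁.mul hequi ih₂
  | omega _ ih => exact ih.of_tendsto_pow hopen hequi (hlim _)

theorem compatible_decompositions_general
    {A M : Type*} [Monoid M] [TopologicalSpace M]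
    [CompactSpace M] [T2Space M]
    (hcont : Continuous fun p : M × M => p.1 * p.2)
    (hopen : IsOpenMap fun p : M × M => p.1 * p.2)
    (hequi : ∀ s t u v : M, s * t = u * v →
      ∃ z : M, (s = u * z ∧ z * t = v) ∨ (s * z = u ∧ t = z * v))
    (f : A → M) (w : M → M)
    (hlim : ∀ m : M, Tendsto (fun n : ℕ => m ^ (n + 1)) atTop (nhds (w m)))
    (hone : ∀ u v : M, u * v = 1 → u = 1 ∧ v = 1)
    (hletter : ∀ (a : A) (u v : M), u * v = f a → (u = 1 ∧ v = f a) ∨ (u = f a ∧ v = 1))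
    (v : M) (hv : OmegaWord f w v)
    (vs vt : ℕ → M)
    (hfact : ∀ i : ℕ, 1 ≤ i → OmegaWord f w (vs i) ∧ OmegaWord f w (vt i) ∧
      v = vs i * vt i) :
    ∃ i j : ℕ, 1 ≤ i ∧ i < j ∧ v = vs j * vt i := by
  have : ContinuousMul M := ⟨hcont⟩
  obtain ⟨i, j, hij, h⟩ := hv.hasCompatibleFactorizations hopen hequi
    (fun m => (tendsto_add_atTop_iff_nat 1).1 (hlim m)) hone hletter
    (fun n => vs (n + 1)) (fun n => vt (n + 1)) fun n => ((hfact (n + 1) n.succ_pos).2.2).symm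
  exact ⟨i + 1, j + 1, i.succ_pos, by omega, h.symm⟩

/-- Let `v` be an ω-word in the free profinite aperiodic monoid (axiomatized as below)
and suppose `v = vs i * vt i` is a factorization into ω-words for each `i ≥ 1`.
Then there exist indices `i < j` such that `v = vs j * vt i`. -/
theorem compatible_decompositions
    {A M : Type*} [Fintype A] [Monoid M] [TopologicalSpace M]
    [CompactSpace M] [T2Space M]
    (hcont : Continuous fun p : M × M => p.1 * p.2)
    (hopen : IsOpenMap fun p : M × M => p.1 * p.2)
    (hequi : ∀ s t u v : M, s * t = u * v →
      ∃ z : M, (s = u * z ∧ z * t = v) ∨ (s * z = u ∧ t = z * v))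
    (f : A → M) (w : M → M)
    (hidem : ∀ m : M, w m * w m = w m)
    (hlim : ∀ m : M, Tendsto (fun n : ℕ => m ^ (n + 1)) atTop (nhds (w m)))
    (huniq : ∀ m e : M, e * e = e → e ∈ closure {x : M | ∃ n : ℕ, x = m ^ (n + 1)} →
      e = w m)
    (hone : ∀ u v : M, u * v = 1 → u = 1 ∧ v = 1)
    (hletter : ∀ (a : A) (u v : M), u * v = f a → (u = 1 ∧ v = f a) ∨ (u = f a ∧ v = 1))
    (v : M) (hv : OmegaWord f w v)
    (vs vt : ℕ → M)
    (hfact : ∀ i : ℕ, 1 ≤ i → OmegaWord f w (vs i) ∧ OmegaWord f w (vt i) ∧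
      v = vs i * vt i) :
    ∃ i j : ℕ, 1 ≤ i ∧ i < j ∧ v = vs j * vt i :=
  compatible_decompositions_general hcont hopen hequi f w hlim hone hletter v hv vs vt hfact
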